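/- Dimensional monotonicity: suppose the achievement matrix x is obtained from y by a dimensional increment among the poor, i.e. there is a single entry (i', j') with x_{i'j'} > z_{j'} > y_{i'j'} (so x_{i'j'} > y_{i'j'} and the increment lifts person i' above the cutoff in dimension j'), all other entries of x and y coincide, and person i' is poor in y (ρ_k(y_{i'}) = 1). Then for all α ≥ 0, FGT_α(x; z) < FGT_α(y; z). -/

import Mathlib

open Finset

/-- Deprivation gap `r_{ij}^α` for an achievement row `y` (convention `0 ^ (0:ℝ) = 1`). -/
noncomputable def gap {d : ℕ} (z y : Fin d → ℝ) (α : ℝ) (j : Fin d) : ℝ :=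
  if y j ≤ z j then ((z j - y j) / z j) ^ α else 0

/-- Network-adjusted deprivation `D_{ij}^α`. -/
noncomputable def Dnet {d : ℕ} (M : Fin d → Fin d → ℝ) (z y : Fin d → ℝ) (α : ℝ)
    (j : Fin d) : ℝ :=
  gap z y α j + (1 / ((d : ℝ) - 1)) * ∑ j' ∈ Finset.univ.erase j, M j j' * gap z y α j'

/-- Sum `Σ_j` of the `j`-th column of `M`. -/
noncomputable def colSum {d : ℕ} (M : Fin d → Fin d → ℝ) (j : Fin d) : ℝ := ∑ j', M j' j

/-- Weighted deprivation count `D_i = Σ_j w_j D_{ij}^0`. -/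
noncomputable def Dcount {d : ℕ} (M : Fin d → Fin d → ℝ) (z w y : Fin d → ℝ) : ℝ :=
  ∑ j, w j * Dnet M z y 0 j

/-- Dual-cutoff identification function `ρ_k`. -/
noncomputable def rho {d : ℕ} (M : Fin d → Fin d → ℝ) (z w : Fin d → ℝ) (k : ℝ)
    (y : Fin d → ℝ) : ℝ :=
  if k ≤ Dcount M z w y then 1 else 0

/-- Network-adjusted FGT measure with normalizing constant `dt`. -/
noncomputable def FGT {N d : ℕ} (M : Fin d → Fin d → ℝ) (z w : Fin d → ℝ) (k α dt : ℝ)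
    (y : Fin N → Fin d → ℝ) : ℝ :=
  (1 / ((N : ℝ) * dt)) * ∑ i, ∑ j, w j * Dnet M z (y i) α j * rho M z w k (y i)


/-!
Lifting person `i'` above the cutoff in dimension `j'` turns the gap `r_{i'j'}` from positive to
zero and leaves every other gap unchanged, so each network-adjusted deprivation `D_{i'j}` weakly
decreases and `D_{i'j'}` strictly. If `i'` stays poor, their weighted deprivation strictly
decreases; if `i'` leaves the poor, it drops from a positive value to zero. Nobody else changes.
-/

section Deprivation

variable {d : ℕ} {z x y : Fin d → ℝ} {α : ℝ} {j : Fin d}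

lemma gap_nonneg (hz : 0 ≤ z j) : 0 ≤ gap z y α j := by
  unfold gap
  split_ifs with h
  · exact Real.rpow_nonneg (div_nonneg (sub_nonneg.mpr h) hz) α
  · exact le_rfl

lemma gap_pos (hz : 0 < z j) (h : y j < z j) : 0 < gap z y α j := by
  rw [gap, if_pos h.le]
  exact Real.rpow_pos_of_pos (div_pos (sub_pos.mpr h) hz) α

lemma gap_eq_zero_of_lt (h : z j < y j) : gap z y α j = 0 := by
  rw [gap, if_neg h.not_ge]

lemma gap_congr (h : x j = y j) : gap z x α j = gap z y α j := by
  rw [gap, gap, h]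

lemma gap_le_of_lift {j' : Fin d} (hz : 0 ≤ z j') (hlift : z j' < x j')
    (hxy : ∀ j, j ≠ j' → x j = y j) (j : Fin d) : gap z x α j ≤ gap z y α j := by
  rcases eq_or_ne j j' with rfl | hj
  · rw [gap_eq_zero_of_lt hlift]
    exact gap_nonneg hz
  · exact (gap_congr (hxy j hj)).le

lemma gap_lt_of_lift (hz : 0 < z j) (hdep : y j < z j) (hlift : z j < x j) :
    gap z x α j < gap z y α j := by
  rw [gap_eq_zero_of_lt hlift]
  exact gap_pos hz hdep

/-- For `d = 1` the coefficient is `1 / 0 = 0`. -/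
lemma one_div_dim_sub_one_nonneg (j : Fin d) : 0 ≤ 1 / ((d : ℝ) - 1) := by
  have : (1 : ℝ) ≤ d := by exact_mod_cast Fin.pos j
  exact one_div_nonneg.mpr (sub_nonneg.mpr this)

variable {M : Fin d → Fin d → ℝ}

lemma Dnet_nonneg (hz : ∀ j, 0 ≤ z j) (hM : ∀ j j', 0 ≤ M j j') : 0 ≤ Dnet M z y α j := by
  unfold Dnet
  have hsum : 0 ≤ ∑ j' ∈ univ.erase j, M j j' * gap z y α j' :=
    sum_nonneg fun j' _ => mul_nonneg (hM j j') (gap_nonneg (hz j'))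
  have := one_div_dim_sub_one_nonneg j
  have := gap_nonneg (α := α) (y := y) (hz j)
  positivity

lemma Dnet_le_Dnet (hM : ∀ j j', 0 ≤ M j j') (hgap : ∀ j, gap z x α j ≤ gap z y α j) :
    Dnet M z x α j ≤ Dnet M z y α j := by
  unfold Dnet
  gcongr with j' _
  exacts [hgap j, one_div_dim_sub_one_nonneg j, hM j j', hgap j']

lemma Dnet_lt_Dnet (hM : ∀ j j', 0 ≤ M j j') (hgap : ∀ j, gap z x α j ≤ gap z y α j)
    (hlt : gap z x α j < gap z y α j) : Dnet M z x α j < Dnet M z y α j := by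
  unfold Dnet
  refine add_lt_add_of_lt_of_le hlt ?_
  gcongr with j' _
  exacts [one_div_dim_sub_one_nonneg j, hM j j', hgap j']

end Deprivation

noncomputable def censoredDeprivation {d : ℕ} (M : Fin d → Fin d → ℝ) (z w : Fin d → ℝ)
    (k α : ℝ) (y : Fin d → ℝ) : ℝ :=
  ∑ j, w j * Dnet M z y α j * rho M z w k y

section Censored

variable {d : ℕ} {M : Fin d → Fin d → ℝ} {z w x y : Fin d → ℝ} {k α : ℝ}

lemma censoredDeprivation_lt {j' : Fin d} (hw : ∀ j, 0 < w j)
    (hx : ∀ j, 0 ≤ Dnet M z x α j) (hle : ∀ j, Dnet M z x α j ≤ Dnet M z y α j)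
    (hlt : Dnet M z x α j' < Dnet M z y α j') (hpoor : rho M z w k y = 1) :
    censoredDeprivation M z w k α x < censoredDeprivation M z w k α y := by
  simp only [censoredDeprivation, hpoor, mul_one]
  by_cases hxpoor : k ≤ Dcount M z w x
  · simp only [rho, if_pos hxpoor, mul_one]
    exact sum_lt_sum (fun j _ => mul_le_mul_of_nonneg_left (hle j) (hw j).le)
      ⟨j', mem_univ j', mul_lt_mul_of_pos_left hlt (hw j')⟩
  · simp only [rho, if_neg hxpoor, mul_zero, sum_const_zero]
    exact sum_pos' (fun j _ => mul_nonneg (hw j).le ((hx j).trans (hle j)))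
      ⟨j', mem_univ j', mul_pos (hw j') ((hx j').trans_lt hlt)⟩

end Censored

lemma FGT_lt_FGT_of_censoredDeprivation_lt {N d : ℕ} {M : Fin d → Fin d → ℝ}
    {z w : Fin d → ℝ} {k α dt : ℝ} {x y : Fin N → Fin d → ℝ} {i' : Fin N} (hdt : 0 < dt)
    (hother : ∀ i, i ≠ i' → x i = y i)
    (hlt : censoredDeprivation M z w k α (x i') < censoredDeprivation M z w k α (y i')) :
    FGT M z w k α dt x < FGT M z w k α dt y := by
  have hN : (0 : ℝ) < N := by exact_mod_cast Fin.pos i'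
  have hsum : ∑ i, censoredDeprivation M z w k α (x i) < ∑ i, censoredDeprivation M z w k α (y i) :=
    sum_lt_sum (fun i _ => by
        rcases eq_or_ne i i' with rfl | hi
        · exact hlt.le
        · rw [hother i hi])
      ⟨i', mem_univ i', hlt⟩
  exact mul_lt_mul_of_pos_left hsum (by positivity)

theorem FGT_dimensional_monotonicity_general
    (d : ℕ) (z : Fin d → ℝ) (hz : ∀ j, 0 < z j)
    (M : Fin d → Fin d → ℝ) (hM0 : ∀ j j', 0 ≤ M j j')
    (w : Fin d → ℝ) (hw : ∀ j, 0 < w j)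
    (dt : ℝ)
    (k : ℝ) (hk0 : 0 < k) (hk1 : k ≤ dt) (α : ℝ)
    (N : ℕ)
    (x y : Fin N → Fin d → ℝ)
    (i' : Fin N) (j' : Fin d) (hdep : y i' j' < z j') (hlift : z j' < x i' j')
    (hother : ∀ i j, ¬(i = i' ∧ j = j') → x i j = y i j)
    (hpoor : rho M z w k (y i') = 1) :
    FGT M z w k α dt x < FGT M z w k α dt y := by
  have hz' : ∀ j, 0 ≤ z j := fun j => (hz j).le
  have hrow : ∀ j, j ≠ j' → x i' j = y i' j := fun j hj => hother i' j fun h => hj h.2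
  have hgap : ∀ j, gap z (x i') α j ≤ gap z (y i') α j :=
    gap_le_of_lift (hz' j') hlift hrow
  apply FGT_lt_FGT_of_censoredDeprivation_lt (hk0.trans_le hk1)
    (fun i hi => funext fun j => hother i j fun h => hi h.1)
  exact censoredDeprivation_lt hw (fun j => Dnet_nonneg hz' hM0)
    (fun j => Dnet_le_Dnet hM0 hgap)
    (Dnet_lt_Dnet hM0 hgap (gap_lt_of_lift (hz j') hdep hlift)) hpoor

/-- dimensional monotonicity — a dimensional increment among the poor strictly
decreases FGT. -/
theorem FGT_dimensional_monotonicity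
    (d : ℕ) (hd : 2 ≤ d) (z : Fin d → ℝ) (hz : ∀ j, 0 < z j)
    (M : Fin d → Fin d → ℝ) (hM0 : ∀ j j', 0 ≤ M j j') (hM1 : ∀ j j', M j j' ≤ 1)
    (hMdiag : ∀ j, M j j = 1)
    (w : Fin d → ℝ) (hw : ∀ j, 0 < w j) (hwsum : (∑ j, w j) = (d : ℝ))
    (dt : ℝ) (hdt : dt = (d : ℝ) + ((∑ j, w j * colSum M j) - (d : ℝ)) / ((d : ℝ) - 1))
    (k : ℝ) (hk0 : 0 < k) (hk1 : k ≤ dt) (α : ℝ) (hα : 0 ≤ α)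
    (N : ℕ) (hN : 1 ≤ N)
    (x y : Fin N → Fin d → ℝ) (hx : ∀ i j, 0 ≤ x i j) (hy : ∀ i j, 0 ≤ y i j)
    (i' : Fin N) (j' : Fin d) (hdep : y i' j' < z j') (hlift : z j' < x i' j')
    (hother : ∀ i j, ¬(i = i' ∧ j = j') → x i j = y i j)
    (hpoor : rho M z w k (y i') = 1) :
    FGT M z w k α dt x < FGT M z w k α dt y :=
  FGT_dimensional_monotonicity_general d z hz M hM0 w hw dt k hk0 hk1 α N x y i' j' hdep hlift
    hother hpoor
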